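/- arXiv:1908.05513 — 6 statements merged into one kernel-verified Lean document; each statement's English description precedes it below -/
import Mathlib

section
/- Let φ₁, φ₂ > 0 and μ ∈ [0,1). The quadratic equation φ₁φ₂(1-μ)β² - (φ₁ + φ₂ + 2φ₁φ₂)β + φ₂(1+φ₁) = 0 in β has the root β* = [φ₁ + φ₂ + 2φ₁φ₂ - √((φ₁+φ₂)² + 4φ₁φ₂(φ₁ + μφ₂ + μφ₁φ₂))] / (2(1-μ)φ₁φ₂), and this root satisfies 0 ≤ β* ≤ 1. -/
theorem stmt_5 (φ₁ φ₂ μ : ℝ) (hφ₁ : 0 < φ₁) (hφ₂ : 0 < φ₂)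
    (hμ0 : 0 ≤ μ) (hμ1 : μ < 1) :
    let β := (φ₁ + φ₂ + 2 * φ₁ * φ₂ -
      Real.sqrt ((φ₁ + φ₂) ^ 2 + 4 * φ₁ * φ₂ * (φ₁ + μ * φ₂ + μ * φ₁ * φ₂))) /
      (2 * (1 - μ) * φ₁ * φ₂)
    φ₁ * φ₂ * (1 - μ) * β ^ 2 - (φ₁ + φ₂ + 2 * φ₁ * φ₂) * β + φ₂ * (1 + φ₁) = 0 ∧
    0 ≤ β ∧ β ≤ 1 := by
  intro β
  have h1μ : 0 < 1 - μ := by linarith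
  have hD : 0 ≤ (φ₁ + φ₂) ^ 2 + 4 * φ₁ * φ₂ * (φ₁ + μ * φ₂ + μ * φ₁ * φ₂) := by positivity
  set s := Real.sqrt ((φ₁ + φ₂) ^ 2 + 4 * φ₁ * φ₂ * (φ₁ + μ * φ₂ + μ * φ₁ * φ₂)) with hsdef
  have hs2 : s ^ 2 = (φ₁ + φ₂) ^ 2 + 4 * φ₁ * φ₂ * (φ₁ + μ * φ₂ + μ * φ₁ * φ₂) :=
    Real.sq_sqrt hD
  have hsnn : 0 ≤ s := Real.sqrt_nonneg _
  have ha : 0 < 2 * (1 - μ) * φ₁ * φ₂ := by positivity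
  -- s ≤ b
  have key1 : 0 ≤ 4 * (1 - μ) * φ₁ * φ₂ ^ 2 * (1 + φ₁) := by positivity
  have hsq1 : s ^ 2 ≤ (φ₁ + φ₂ + 2 * φ₁ * φ₂) ^ 2 := by nlinarith [hs2, key1]
  have hb : (0:ℝ) ≤ φ₁ + φ₂ + 2 * φ₁ * φ₂ := by positivity
  have hsleb : s ≤ φ₁ + φ₂ + 2 * φ₁ * φ₂ := by
    calc s = Real.sqrt (s ^ 2) := (Real.sqrt_sq hsnn).symm
      _ ≤ Real.sqrt ((φ₁ + φ₂ + 2 * φ₁ * φ₂) ^ 2) := Real.sqrt_le_sqrt hsq1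
      _ = φ₁ + φ₂ + 2 * φ₁ * φ₂ := Real.sqrt_sq hb
  -- b - 2a ≤ s
  have key2 : 0 ≤ 4 * (1 - μ) * φ₁ * φ₂ * (φ₁ * (1 + μ * φ₂)) := by positivity
  have hsq2 : (φ₁ + φ₂ + 2 * φ₁ * φ₂ - 2 * (1 - μ) * φ₁ * φ₂) ^ 2 ≤ s ^ 2 := by
    nlinarith [hs2, key2]
  have hts : φ₁ + φ₂ + 2 * φ₁ * φ₂ - 2 * (1 - μ) * φ₁ * φ₂ ≤ s := by
    calc φ₁ + φ₂ + 2 * φ₁ * φ₂ - 2 * (1 - μ) * φ₁ * φ₂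
        ≤ |φ₁ + φ₂ + 2 * φ₁ * φ₂ - 2 * (1 - μ) * φ₁ * φ₂| := le_abs_self _
      _ = Real.sqrt ((φ₁ + φ₂ + 2 * φ₁ * φ₂ - 2 * (1 - μ) * φ₁ * φ₂) ^ 2) :=
          (Real.sqrt_sq_eq_abs _).symm
      _ ≤ Real.sqrt (s ^ 2) := Real.sqrt_le_sqrt hsq2
      _ = s := Real.sqrt_sq hsnn
  refine ⟨?_, ?_, ?_⟩
  · show φ₁ * φ₂ * (1 - μ) *
        ((φ₁ + φ₂ + 2 * φ₁ * φ₂ - s) / (2 * (1 - μ) * φ₁ * φ₂)) ^ 2 -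
        (φ₁ + φ₂ + 2 * φ₁ * φ₂) *
        ((φ₁ + φ₂ + 2 * φ₁ * φ₂ - s) / (2 * (1 - μ) * φ₁ * φ₂)) + φ₂ * (1 + φ₁) = 0
    have hane : (2 * (1 - μ) * φ₁ * φ₂) ≠ 0 := ne_of_gt ha
    field_simp
    nlinarith [hs2, sq_nonneg s]
  · exact div_nonneg (by linarith) (le_of_lt ha)
  · show (φ₁ + φ₂ + 2 * φ₁ * φ₂ - s) / (2 * (1 - μ) * φ₁ * φ₂) ≤ 1
    rw [div_le_one ha]
    linarith
end

section
/- Let φ₁, φ₂ > 0 and μ ∈ [0,1). The equal-rate power fraction β* = [φ₁ + φ₂ + 2φ₁φ₂ - √((φ₁+φ₂)² + 4φ₁φ₂(φ₁ + μφ₂ + μφ₁φ₂))] / (2(1-μ)φ₁φ₂) satisfies β* ≥ 1/2 if and only if φ₂ ≥ 2φ₁ / (2 + φ₁(1-μ)). -/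
theorem stmt_6 (φ₁ φ₂ μ : ℝ) (hφ₁ : 0 < φ₁) (hφ₂ : 0 < φ₂)
    (hμ0 : 0 ≤ μ) (hμ1 : μ < 1) :
    (φ₁ + φ₂ + 2 * φ₁ * φ₂ -
      Real.sqrt ((φ₁ + φ₂) ^ 2 + 4 * φ₁ * φ₂ * (φ₁ + μ * φ₂ + μ * φ₁ * φ₂))) /
      (2 * (1 - μ) * φ₁ * φ₂) ≥ 1 / 2 ↔
    φ₂ ≥ 2 * φ₁ / (2 + φ₁ * (1 - μ)) := by
  have hμ : 0 < 1 - μ := by linarith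
  have hd : 0 < 2 * (1 - μ) * φ₁ * φ₂ := by positivity
  have hden : 0 < 2 + φ₁ * (1 - μ) := by nlinarith
  have hE : (0:ℝ) ≤ φ₁ + φ₂ + 2 * φ₁ * φ₂ - 1 / 2 * (2 * (1 - μ) * φ₁ * φ₂) := by nlinarith
  rw [ge_iff_le, le_div_iff₀ hd, ge_iff_le, div_le_iff₀ hden, ← sub_nonneg,
    show φ₁ + φ₂ + 2 * φ₁ * φ₂ -
      Real.sqrt ((φ₁ + φ₂) ^ 2 + 4 * φ₁ * φ₂ * (φ₁ + μ * φ₂ + μ * φ₁ * φ₂)) -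
      1 / 2 * (2 * (1 - μ) * φ₁ * φ₂) =
      (φ₁ + φ₂ + 2 * φ₁ * φ₂ - 1 / 2 * (2 * (1 - μ) * φ₁ * φ₂)) -
      Real.sqrt ((φ₁ + φ₂) ^ 2 + 4 * φ₁ * φ₂ * (φ₁ + μ * φ₂ + μ * φ₁ * φ₂)) by ring,
    sub_nonneg, Real.sqrt_le_iff]
  constructor
  · rintro ⟨-, h⟩
    nlinarith [sq_nonneg (φ₁ - φ₂), mul_pos hφ₁ hφ₂, sq_nonneg φ₁, sq_nonneg φ₂]
  · intro h
    refine ⟨hE, ?_⟩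
    nlinarith [mul_pos hφ₁ hφ₂, sq_nonneg (φ₁ - φ₂)]
end

section
/- Let S, P, k > 0 with S² ≥ 4P (ensuring real roots context) and define γ(k) = (√(S² + 4Pk) - S)/(2k). Then γ is strictly decreasing in k on (0,∞). -/
theorem stmt_7 (S P : ℝ) (hS : 0 < S) (hP : 0 < P) (h : S ^ 2 ≥ 4 * P) :
    StrictAntiOn (fun k : ℝ => (Real.sqrt (S ^ 2 + 4 * P * k) - S) / (2 * k))
      (Set.Ioi 0) := by
  have key : ∀ k : ℝ, 0 < k →
      (Real.sqrt (S ^ 2 + 4 * P * k) - S) / (2 * k)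
        = 2 * P / (Real.sqrt (S ^ 2 + 4 * P * k) + S) := by
    intro k hk
    have hnn : 0 ≤ S ^ 2 + 4 * P * k := by positivity
    have hsq : Real.sqrt (S ^ 2 + 4 * P * k) ^ 2 = S ^ 2 + 4 * P * k :=
      Real.sq_sqrt hnn
    have hpos : 0 < Real.sqrt (S ^ 2 + 4 * P * k) + S := by
      have := Real.sqrt_nonneg (S ^ 2 + 4 * P * k); linarith
    field_simp
    nlinarith [hsq]
  intro a ha b hb hab
  simp only [Set.mem_Ioi] at ha hb
  beta_reduce; rw [key a ha, key b hb]
  have hsa : 0 < Real.sqrt (S ^ 2 + 4 * P * a) + S := by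
    have := Real.sqrt_nonneg (S ^ 2 + 4 * P * a); linarith
  have hlt : Real.sqrt (S ^ 2 + 4 * P * a) + S < Real.sqrt (S ^ 2 + 4 * P * b) + S := by
    have : Real.sqrt (S ^ 2 + 4 * P * a) < Real.sqrt (S ^ 2 + 4 * P * b) := by
      apply Real.sqrt_lt_sqrt (by positivity)
      nlinarith
    linarith
  exact div_lt_div_of_pos_left (by positivity) hsa hlt
end

section
/- Let φ₁, φ₂ > 0 with φ₂ ≥ φ₁, μ ∈ [0,1], and let γ₁ = [-（φ₁+φ₂) + √((φ₁+φ₂)² + 4φ₁φ₂(φ₁ + μ(1+φ₁)φ₂))] / (2(φ₁ + μφ₂(1+φ₁))). Then γ₁ > √(1+φ₁) - 1 (equivalently log₂(1+γ₁) > (1/2)log₂(1+φ₁)) if and only if μ < (φ₂ - φ₁)(1 + √(1+φ₁)) / (φ₁φ₂√(1+φ₁)). -/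
theorem stmt_10 (φ₁ φ₂ μ : ℝ) (hφ₁ : 0 < φ₁) (hφ₂ : 0 < φ₂) (h : φ₂ ≥ φ₁)
    (hμ0 : 0 ≤ μ) (hμ1 : μ ≤ 1) :
    let γ₁ := (-(φ₁ + φ₂) +
      Real.sqrt ((φ₁ + φ₂) ^ 2 + 4 * φ₁ * φ₂ * (φ₁ + μ * (1 + φ₁) * φ₂))) /
      (2 * (φ₁ + μ * φ₂ * (1 + φ₁)))
    γ₁ > Real.sqrt (1 + φ₁) - 1 ↔
      μ < (φ₂ - φ₁) * (1 + Real.sqrt (1 + φ₁)) / (φ₁ * φ₂ * Real.sqrt (1 + φ₁)) := by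
  intro γ₁
  set s := Real.sqrt (1 + φ₁) with hs
  have h1 : (0:ℝ) < 1 + φ₁ := by linarith
  have hs2 : s ^ 2 = 1 + φ₁ := Real.sq_sqrt h1.le
  have hs0 : 0 ≤ s := Real.sqrt_nonneg _
  have hs1 : 1 < s := by nlinarith
  have ht : 0 < φ₁ + μ * φ₂ * (1 + φ₁) := by
    have : 0 ≤ μ * φ₂ * (1 + φ₁) := by positivity
    linarith
  have hD : 0 < 2 * (φ₁ + μ * φ₂ * (1 + φ₁)) := by linarith
  have hB : 0 ≤ (s - 1) * (2 * (φ₁ + μ * φ₂ * (1 + φ₁))) + (φ₁ + φ₂) := by nlinarith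
  have hpos : 0 < φ₁ * φ₂ * s := by positivity
  have hφ : φ₁ = s ^ 2 - 1 := by linarith
  have step1 : γ₁ > s - 1 ↔
      ((s - 1) * (2 * (φ₁ + μ * φ₂ * (1 + φ₁))) + (φ₁ + φ₂)) ^ 2 <
        (φ₁ + φ₂) ^ 2 + 4 * φ₁ * φ₂ * (φ₁ + μ * (1 + φ₁) * φ₂) := by
    rw [gt_iff_lt, show γ₁ = (-(φ₁ + φ₂) +
      Real.sqrt ((φ₁ + φ₂) ^ 2 + 4 * φ₁ * φ₂ * (φ₁ + μ * (1 + φ₁) * φ₂))) /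
      (2 * (φ₁ + μ * φ₂ * (1 + φ₁))) from rfl, lt_div_iff₀ hD]
    rw [← Real.lt_sqrt hB]
    constructor <;> intro hh <;> linarith
  rw [step1, lt_div_iff₀ hpos]
  rw [hφ]
  have hfac : 0 < 4 * (s ^ 2 - 1 + μ * φ₂ * (1 + (s ^ 2 - 1))) * s * (s - 1) := by
    have ht' : 0 < s ^ 2 - 1 + μ * φ₂ * (1 + (s ^ 2 - 1)) := by rw [← hφ]; exact ht
    have := mul_pos (mul_pos (by linarith : (0:ℝ) < 4 * (s ^ 2 - 1 + μ * φ₂ * (1 + (s ^ 2 - 1)))) (by linarith : (0:ℝ) < s)) (by linarith : (0:ℝ) < s - 1)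
    linarith [this]
  have hid : (s ^ 2 - 1 + φ₂) ^ 2 + 4 * (s ^ 2 - 1) * φ₂ * (s ^ 2 - 1 + μ * (1 + (s ^ 2 - 1)) * φ₂)
      - ((s - 1) * (2 * (s ^ 2 - 1 + μ * φ₂ * (1 + (s ^ 2 - 1)))) + (s ^ 2 - 1 + φ₂)) ^ 2
      = (4 * (s ^ 2 - 1 + μ * φ₂ * (1 + (s ^ 2 - 1))) * s * (s - 1)) *
        ((φ₂ - (s ^ 2 - 1)) - μ * φ₂ * s * (s - 1)) := by ring
  constructor <;> intro hh
  · have hX : 0 < (φ₂ - (s ^ 2 - 1)) - μ * φ₂ * s * (s - 1) := by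
      by_contra hx
      push_neg at hx
      nlinarith [mul_nonneg hfac.le (neg_nonneg.mpr hx)]
    nlinarith [mul_pos hX (show (0:ℝ) < 1 + s by linarith)]
  · have hX : 0 < (φ₂ - (s ^ 2 - 1)) - μ * φ₂ * s * (s - 1) := by
      by_contra hx
      push_neg at hx
      have hmul := mul_nonneg (show (0:ℝ) ≤ 1 + s by linarith) (neg_nonneg.mpr hx)
      nlinarith [hmul]
    nlinarith [mul_pos hfac hX]
end

section
/- Let φ₁, φ₂ > 0 and μ ∈ [0,1]. The function γ̄(β) = φ₁β/(1 + (1-β)φ₁) + φ₂(1-β)/(1 + μβφ₂) is strictly convex on [1/2, 1]: its second derivative 2φ₁²(1+φ₁)/(1+(1-β)φ₁)³ + 2μφ₂²(1+μφ₂)/(1+μβφ₂)³ is positive (for μ > 0; nonnegative for μ = 0), so its maximum over [1/2,1] is attained at an endpoint. -/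
/-!
A linear-fractional function `(p + q x) / (a + b x)` is, on a region where its denominator is
positive, strictly convex exactly when `b (p b - q a) > 0`; half of its second derivative is
`b (p b - q a) / (a + b x) ^ 3`. Both summands of `γ̄` are of this form, with
`b (p b - q a)` equal to `φ₁² (1 + φ₁)` and `μ φ₂² (1 + μ φ₂)` respectively, so `γ̄` is strictly
convex, and a convex function on a segment is maximised at an endpoint.
-/

open Set

theorem div_affine_convex_combination_gap (p q a b x y t : ℝ) (hx : a + b * x ≠ 0)
    (hy : a + b * y ≠ 0) (hz : a + b * (t * x + (1 - t) * y) ≠ 0) :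
    t * ((p + q * x) / (a + b * x)) + (1 - t) * ((p + q * y) / (a + b * y))
        - (p + q * (t * x + (1 - t) * y)) / (a + b * (t * x + (1 - t) * y)) =
      t * (1 - t) * (x - y) ^ 2 * (b * (p * b - q * a)) /
        ((a + b * x) * (a + b * y) * (a + b * (t * x + (1 - t) * y))) := by
  rw [mul_div_assoc', mul_div_assoc', div_add_div _ _ hx hy, div_sub_div _ _ (by positivity) hz,
    div_eq_div_iff (by positivity) (by positivity)]
  ring

theorem convexOn_div_affine {s : Set ℝ} (hs : Convex ℝ s) {p q a b : ℝ}
    (hD : ∀ x ∈ s, 0 < a + b * x) (h : 0 ≤ b * (p * b - q * a)) :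
    ConvexOn ℝ s (fun x => (p + q * x) / (a + b * x)) := by
  refine ⟨hs, fun x hx y hy t u ht hu htu => ?_⟩
  obtain rfl : u = 1 - t := by linarith
  have hz := hD _ (hs hx hy ht hu htu)
  simp only [smul_eq_mul] at hz ⊢
  have hgap := div_affine_convex_combination_gap p q a b x y t (hD x hx).ne' (hD y hy).ne' hz.ne'
  have : 0 ≤ t * (1 - t) * (x - y) ^ 2 * (b * (p * b - q * a)) /
      ((a + b * x) * (a + b * y) * (a + b * (t * x + (1 - t) * y))) := by
    have := hD x hx; have := hD y hy
    positivity
  linarith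

theorem strictConvexOn_div_affine {s : Set ℝ} (hs : Convex ℝ s) {p q a b : ℝ}
    (hD : ∀ x ∈ s, 0 < a + b * x) (h : 0 < b * (p * b - q * a)) :
    StrictConvexOn ℝ s (fun x => (p + q * x) / (a + b * x)) := by
  refine ⟨hs, fun x hx y hy hxy t u ht hu htu => ?_⟩
  obtain rfl : u = 1 - t := by linarith
  have hz := hD _ (hs.starConvex hx hy ht.le hu.le htu)
  simp only [smul_eq_mul] at hz ⊢
  have hgap := div_affine_convex_combination_gap p q a b x y t (hD x hx).ne' (hD y hy).ne' hz.ne'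
  have : 0 < t * (1 - t) * (x - y) ^ 2 * (b * (p * b - q * a)) /
      ((a + b * x) * (a + b * y) * (a + b * (t * x + (1 - t) * y))) := by
    have := hD x hx; have := hD y hy; have := sub_ne_zero.2 hxy
    positivity
  linarith

theorem ConvexOn.isMaxOn_left_or_right {f : ℝ → ℝ} {a b : ℝ} (hf : ConvexOn ℝ (Icc a b) f)
    (hab : a ≤ b) : IsMaxOn f (Icc a b) a ∨ IsMaxOn f (Icc a b) b := by
  have hle : ∀ z ∈ Icc a b, f z ≤ max (f a) (f b) := fun z hz =>
    hf.le_max_of_mem_Icc (left_mem_Icc.2 hab) (right_mem_Icc.2 hab) hz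
  rcases le_total (f b) (f a) with h | h
  · exact .inl fun z hz => (hle z hz).trans (max_eq_left h).le
  · exact .inr fun z hz => (hle z hz).trans (max_eq_right h).le

theorem stmt_14_general (φ₁ φ₂ μ : ℝ) (hφ₁ : 0 < φ₁) (hφ₂ : 0 < φ₂)
    (hμ0 : 0 ≤ μ) :
    (∀ β ∈ Set.Icc (1 / 2 : ℝ) 1,
      (0 < μ → 0 < 2 * φ₁ ^ 2 * (1 + φ₁) / (1 + (1 - β) * φ₁) ^ 3 +
        2 * μ * φ₂ ^ 2 * (1 + μ * φ₂) / (1 + μ * β * φ₂) ^ 3) ∧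
      0 ≤ 2 * φ₁ ^ 2 * (1 + φ₁) / (1 + (1 - β) * φ₁) ^ 3 +
        2 * μ * φ₂ ^ 2 * (1 + μ * φ₂) / (1 + μ * β * φ₂) ^ 3) ∧
    (0 < μ → StrictConvexOn ℝ (Set.Icc (1 / 2 : ℝ) 1)
      (fun β : ℝ => φ₁ * β / (1 + (1 - β) * φ₁) + φ₂ * (1 - β) / (1 + μ * β * φ₂))) ∧
    (IsMaxOn (fun β : ℝ => φ₁ * β / (1 + (1 - β) * φ₁) + φ₂ * (1 - β) / (1 + μ * β * φ₂))
        (Set.Icc (1 / 2 : ℝ) 1) (1 / 2) ∨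
     IsMaxOn (fun β : ℝ => φ₁ * β / (1 + (1 - β) * φ₁) + φ₂ * (1 - β) / (1 + μ * β * φ₂))
        (Set.Icc (1 / 2 : ℝ) 1) 1) := by
  have hD₁ : ∀ β ∈ Icc (1 / 2 : ℝ) 1, 0 < 1 + (1 - β) * φ₁ := fun β hβ => by
    nlinarith [hβ.2]
  have hD₂ : ∀ β ∈ Icc (1 / 2 : ℝ) 1, 0 < 1 + μ * β * φ₂ := fun β hβ => by
    have : 0 ≤ β := by linarith [hβ.1]
    positivity
  have hconv₁ : StrictConvexOn ℝ (Icc (1 / 2 : ℝ) 1) fun β => φ₁ * β / (1 + (1 - β) * φ₁) :=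
    (strictConvexOn_div_affine (p := 0) (q := φ₁) (a := 1 + φ₁) (b := -φ₁) (convex_Icc _ _)
      (fun β hβ => by linarith [hD₁ β hβ]) (by ring_nf; positivity)).congr
      fun β _ => by ring_nf
  have hconv₂ : ConvexOn ℝ (Icc (1 / 2 : ℝ) 1) fun β => φ₂ * (1 - β) / (1 + μ * β * φ₂) :=
    (convexOn_div_affine (p := φ₂) (q := -φ₂) (a := 1) (b := μ * φ₂) (convex_Icc _ _)
      (fun β hβ => by linarith [hD₂ β hβ]) (by ring_nf; positivity)).congr
      fun β _ => by ring_nf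
  have hconv := hconv₁.add_convexOn hconv₂
  refine ⟨fun β hβ => ?_, fun _ => hconv, hconv.convexOn.isMaxOn_left_or_right (by norm_num)⟩
  have := hD₁ β hβ; have := hD₂ β hβ
  exact ⟨fun _ => by positivity, by positivity⟩

theorem stmt_14 (φ₁ φ₂ μ : ℝ) (hφ₁ : 0 < φ₁) (hφ₂ : 0 < φ₂)
    (hμ0 : 0 ≤ μ) (hμ1 : μ ≤ 1) :
    (∀ β ∈ Set.Icc (1 / 2 : ℝ) 1,
      (0 < μ → 0 < 2 * φ₁ ^ 2 * (1 + φ₁) / (1 + (1 - β) * φ₁) ^ 3 +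
        2 * μ * φ₂ ^ 2 * (1 + μ * φ₂) / (1 + μ * β * φ₂) ^ 3) ∧
      0 ≤ 2 * φ₁ ^ 2 * (1 + φ₁) / (1 + (1 - β) * φ₁) ^ 3 +
        2 * μ * φ₂ ^ 2 * (1 + μ * φ₂) / (1 + μ * β * φ₂) ^ 3) ∧
    (0 < μ → StrictConvexOn ℝ (Set.Icc (1 / 2 : ℝ) 1)
      (fun β : ℝ => φ₁ * β / (1 + (1 - β) * φ₁) + φ₂ * (1 - β) / (1 + μ * β * φ₂))) ∧
    (IsMaxOn (fun β : ℝ => φ₁ * β / (1 + (1 - β) * φ₁) + φ₂ * (1 - β) / (1 + μ * β * φ₂))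
        (Set.Icc (1 / 2 : ℝ) 1) (1 / 2) ∨
     IsMaxOn (fun β : ℝ => φ₁ * β / (1 + (1 - β) * φ₁) + φ₂ * (1 - β) / (1 + μ * β * φ₂))
        (Set.Icc (1 / 2 : ℝ) 1) 1) :=
  stmt_14_general φ₁ φ₂ μ hφ₁ hφ₂ hμ0
end

section
/- For φ₂ ≥ φ₁ > 0: (1+φ₁)(2+φ₂)/(2+φ₁) ≥ (2+φ₁+φ₂)/2 ≥ √((1+φ₁)(1+φ₂)). Hence the perfect-SIC NOMA sum-rate objective (1+φ₁)(2+φ₂)/(2+φ₁) is at least the OMA objective √((1+φ₁)(1+φ₂)). -/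
theorem stmt_16 (φ₁ φ₂ : ℝ) (hφ₁ : 0 < φ₁) (h : φ₂ ≥ φ₁) :
    (1 + φ₁) * (2 + φ₂) / (2 + φ₁) ≥ (2 + φ₁ + φ₂) / 2 ∧
    (2 + φ₁ + φ₂) / 2 ≥ Real.sqrt ((1 + φ₁) * (1 + φ₂)) := by
  constructor
  · rw [ge_iff_le, div_le_div_iff₀ (by linarith) (by linarith)]
    nlinarith [mul_nonneg hφ₁.le (sub_nonneg.mpr h)]
  · have hs : Real.sqrt ((1 + φ₁) * (1 + φ₂)) ≤ Real.sqrt (((2 + φ₁ + φ₂) / 2) ^ 2) := by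
      apply Real.sqrt_le_sqrt
      nlinarith [sq_nonneg (φ₁ - φ₂)]
    rwa [Real.sqrt_sq (by linarith)] at hs
end
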